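/- arXiv:2110.04814 — 2 statements merged into one kernel-verified Lean document; each statement's English description precedes it below -/
import Mathlib

section
/- Let P be twice differentiable with M-Lipschitz Hessian, and suppose ‖∇P(x_t) − g_t‖ ≤ C_g ε and ‖∇²P(x_t) − H_t‖ ≤ C_H √(Mε) with C_g = 1/192 and C_H = 1/48. Let s* minimize m(s) = g_tᵀs + ½ sᵀH_t s + (M/6)‖s‖³ and set x_{t+1} = x_t + s*. If x_{t+1} is not an (ε, √(Mε))-second-order stationary point of P (i.e. ‖∇P(x_{t+1})‖ > ε or λ_min(∇²P(x_{t+1})) < −√(Mε)), then ‖s*‖ ≥ (1/2)√(ε/M). -/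
open RealInnerProductSpace

/-- The cubic-regularized quadratic model built from a vector `g` and an operator `H`. -/
noncomputable def cubicModel {d : ℕ} (g : EuclideanSpace ℝ (Fin d))
    (H : EuclideanSpace ℝ (Fin d) →L[ℝ] EuclideanSpace ℝ (Fin d)) (M : ℝ)
    (s : EuclideanSpace ℝ (Fin d)) : ℝ :=
  ⟪g, s⟫ + 1 / 2 * ⟪s, H s⟫ + M / 6 * ‖s‖ ^ 3

open Filter Topology

/-!
Write `λ = (M/2)‖s*‖`. Global minimality of `s*` gives `g_t + H_t s* + λ s* = 0`, and with it the
identity `m(y) - m(s*) = ½⟪y - s*, (H_t + λ)(y - s*)⟫ + (M/12)(‖y‖ - ‖s*‖)²(2‖y‖ + ‖s*‖)`.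
On the sphere `‖y‖ = ‖s*‖` the cubic term vanishes, which yields `H_t + λ ⪰ 0` in every direction
not orthogonal to `s*`, hence in all directions by continuity; when `s* = 0` one lets `y = t v`
with `t → 0⁺` instead.

If `‖s*‖ < ½√(ε/M)`, i.e. `M‖s*‖ < ½√(Mε)`, then the first-order Taylor bound for `∇P` and the
approximation errors give `‖∇P(x_t + s*)‖ ≤ (3/2)M‖s*‖² + ε/192 + √(Mε)‖s*‖/48 < ε` and
`∇²P(x_t + s*) ⪰ H_t - (M‖s*‖ + √(Mε)/48) ⪰ -((3/2)M‖s*‖ + √(Mε)/48) ⪰ -√(Mε)`,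
so `x_t + s*` would be a second-order stationary point.
-/

theorem Real.mul_sqrt_div_eq_sqrt_mul {x : ℝ} (hx : 0 < x) (y : ℝ) :
    x * √(y / x) = √(x * y) := by
  rw [← Real.sqrt_sq hx.le, ← Real.sqrt_mul (sq_nonneg x), Real.sqrt_sq hx.le]
  field_simp

section Normed

variable {E F : Type*} [NormedAddCommGroup E] [NormedSpace ℝ E] [NormedAddCommGroup F]
  [NormedSpace ℝ F]

theorem norm_sub_sub_fderiv_le_of_lipschitz_fderiv {f : E → F} {M : ℝ} (hM : 0 ≤ M)
    (hf : Differentiable ℝ f) {x : E} (hLip : ∀ y, ‖fderiv ℝ f y - fderiv ℝ f x‖ ≤ M * ‖y - x‖)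
    (s : E) : ‖f (x + s) - f x - fderiv ℝ f x s‖ ≤ M * ‖s‖ ^ 2 := by
  have hx : x ∈ Metric.closedBall x ‖s‖ := Metric.mem_closedBall_self (norm_nonneg s)
  have hxs : x + s ∈ Metric.closedBall x ‖s‖ := by simp [dist_eq_norm]
  have hbound : ∀ y ∈ Metric.closedBall x ‖s‖, ‖fderiv ℝ f y - fderiv ℝ f x‖ ≤ M * ‖s‖ :=
    fun y hy => (hLip y).trans (mul_le_mul_of_nonneg_left (mem_closedBall_iff_norm.mp hy) hM)
  have h := (convex_closedBall x ‖s‖).norm_image_sub_le_of_norm_fderiv_le'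
    (fun y _ => hf y) hbound hx hxs
  rw [add_sub_cancel_left] at h
  linarith

theorem norm_apply_add_le_of_lipschitz_fderiv {f : E → F} {M : ℝ} (hM : 0 ≤ M)
    (hf : Differentiable ℝ f) {x : E} (hLip : ∀ y, ‖fderiv ℝ f y - fderiv ℝ f x‖ ≤ M * ‖y - x‖)
    (g : F) (H : E →L[ℝ] F) (s : E) :
    ‖f (x + s)‖ ≤ M * ‖s‖ ^ 2 + ‖f x - g‖ + ‖fderiv ℝ f x - H‖ * ‖s‖ + ‖g + H s‖ := by
  have hsplit : f (x + s) =
      (f (x + s) - f x - fderiv ℝ f x s) + (f x - g) + (fderiv ℝ f x - H) s + (g + H s) := by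
    simp only [sub_apply]
    abel
  rw [hsplit]
  refine norm_add₄_le.trans ?_
  gcongr
  · exact norm_sub_sub_fderiv_le_of_lipschitz_fderiv hM hf hLip s
  · exact (fderiv ℝ f x - H).le_opNorm s

theorem ContinuousLinearMap.dense_setOf_apply_ne_zero {ℓ : E →L[ℝ] ℝ} (hℓ : ℓ ≠ 0) :
    Dense {x | ℓ x ≠ 0} := by
  have hker : interior (LinearMap.ker (ℓ : E →ₗ[ℝ] ℝ) : Set E) = ∅ := by
    refine Set.not_nonempty_iff_eq_empty.mp fun hne => hℓ ?_
    ext x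
    simpa using (Submodule.eq_top_of_nonempty_interior' _ hne).ge (Submodule.mem_top (x := x))
  exact interior_eq_empty_iff_dense_compl.mp hker

end Normed

section InnerProduct

variable {E : Type*} [NormedAddCommGroup E] [InnerProductSpace ℝ E]

theorem hasFDerivAt_norm_pow_three (x : E) :
    HasFDerivAt (fun v : E => ‖v‖ ^ 3) ((3 * ‖x‖) • innerSL ℝ x) x := by
  have h := hasFDerivAt_norm_rpow x (p := 3) (by norm_num)
  norm_num at h
  exact_mod_cast h

theorem ContDiff.differentiable_gradient [CompleteSpace E] {f : E → ℝ} (hf : ContDiff ℝ 2 f) :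
    Differentiable ℝ (gradient f) :=
  ((InnerProductSpace.toDual ℝ E).symm.contDiff.comp
    (hf.fderiv_right (m := 1) (by norm_num))).differentiable one_ne_zero

theorem sub_mul_norm_sq_le_inner_apply_self {A B : E →L[ℝ] E} {c : ℝ} (h : ‖A - B‖ ≤ c) (v : E) :
    ⟪v, B v⟫ - c * ‖v‖ ^ 2 ≤ ⟪v, A v⟫ := by
  have hdiff : |⟪v, (A - B) v⟫| ≤ c * ‖v‖ ^ 2 :=
    calc |⟪v, (A - B) v⟫| ≤ ‖v‖ * (‖A - B‖ * ‖v‖) :=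
          (abs_real_inner_le_norm _ _).trans (by gcongr; exact (A - B).le_opNorm v)
      _ ≤ c * ‖v‖ ^ 2 := by nlinarith [norm_nonneg v, sq_nonneg ‖v‖]
  rw [sub_apply, inner_sub_right] at hdiff
  linarith [neg_abs_le (⟪v, A v⟫ - ⟪v, B v⟫)]

end InnerProduct

namespace cubicModel

variable {d : ℕ} {g : EuclideanSpace ℝ (Fin d)}
  {H : EuclideanSpace ℝ (Fin d) →L[ℝ] EuclideanSpace ℝ (Fin d)} {M : ℝ}

theorem hasGradientAt (hH : ∀ u v, ⟪H u, v⟫ = ⟪u, H v⟫) (s : EuclideanSpace ℝ (Fin d)) :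
    HasGradientAt (cubicModel g H M) (g + H s + (M / 2 * ‖s‖) • s) s := by
  rw [hasGradientAt_iff_hasFDerivAt]
  have hquad := (hasFDerivAt_id s).inner ℝ (H.hasFDerivAt (x := s))
  refine ((((innerSL ℝ g).hasFDerivAt).add (hquad.const_mul (1 / 2))).add
    ((hasFDerivAt_norm_pow_three s).const_mul (M / 6))).congr_fderiv ?_
  ext v
  simp [hH s v, real_inner_comm (H s) v, fderivInnerCLM_apply]
  ring

theorem firstOrder_optimality (hH : ∀ u v, ⟪H u, v⟫ = ⟪u, H v⟫) {s : EuclideanSpace ℝ (Fin d)}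
    (hmin : ∀ y, cubicModel g H M s ≤ cubicModel g H M y) :
    g + H s + (M / 2 * ‖s‖) • s = 0 :=
  (InnerProductSpace.toDual ℝ _).map_eq_zero_iff.mp <|
    IsLocalMin.hasFDerivAt_eq_zero (Eventually.of_forall hmin) (hasGradientAt hH s)

theorem sub_eq_of_firstOrder_optimality (hH : ∀ u v, ⟪H u, v⟫ = ⟪u, H v⟫)
    {s : EuclideanSpace ℝ (Fin d)} (hfoc : g + H s + (M / 2 * ‖s‖) • s = 0)
    (y : EuclideanSpace ℝ (Fin d)) :
    cubicModel g H M y - cubicModel g H M s =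
      1 / 2 * (⟪y - s, H (y - s)⟫ + M / 2 * ‖s‖ * ‖y - s‖ ^ 2) +
        M / 12 * (‖y‖ - ‖s‖) ^ 2 * (2 * ‖y‖ + ‖s‖) := by
  have hg : ∀ u, ⟪g, u⟫ = -⟪s, H u⟫ - M / 2 * ‖s‖ * ⟪s, u⟫ := fun u => by
    have := congrArg (⟪·, u⟫) hfoc
    simp only [inner_add_left, real_inner_smul_left, inner_zero_left, hH] at this
    linarith
  have hHys : ⟪y, H s⟫ = ⟪s, H y⟫ := by rw [real_inner_comm, hH]
  simp only [cubicModel, hg, map_sub, inner_sub_left, inner_sub_right, norm_sub_sq_real,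
    real_inner_self_eq_norm_sq, hHys, real_inner_comm y s]
  ring

theorem secondOrder_optimality_of_inner_ne_zero (hH : ∀ u v, ⟪H u, v⟫ = ⟪u, H v⟫)
    {s : EuclideanSpace ℝ (Fin d)} (hmin : ∀ y, cubicModel g H M s ≤ cubicModel g H M y)
    {w : EuclideanSpace ℝ (Fin d)} (hw : ⟪s, w⟫ ≠ 0) :
    0 ≤ ⟪w, H w⟫ + M / 2 * ‖s‖ * ‖w‖ ^ 2 := by
  have hw0 : ‖w‖ ^ 2 ≠ 0 := fun h => hw (by simp_all)
  set t := -2 * ⟪s, w⟫ / ‖w‖ ^ 2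
  have ht : t ≠ 0 := div_ne_zero (by simpa using hw) hw0
  have hsphere : ‖s + t • w‖ = ‖s‖ := by
    have : ‖s + t • w‖ ^ 2 = ‖s‖ ^ 2 := by
      have htw : t * ‖w‖ ^ 2 = -2 * ⟪s, w⟫ := div_mul_cancel₀ _ hw0
      rw [norm_add_sq_real, real_inner_smul_right, norm_smul, mul_pow, Real.norm_eq_abs, sq_abs]
      linear_combination t * htw
    exact (pow_left_inj₀ (norm_nonneg _) (norm_nonneg _) two_ne_zero).mp this
  have h := (sub_nonneg.mpr (hmin _)).trans_eq
    (sub_eq_of_firstOrder_optimality hH (firstOrder_optimality hH hmin) (s + t • w))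
  simp only [hsphere, sub_self, add_sub_cancel_left, map_smul, real_inner_smul_left,
    real_inner_smul_right, norm_smul, mul_pow, Real.norm_eq_abs, sq_abs] at h
  have ht2 : 0 < t ^ 2 := by positivity
  nlinarith

theorem secondOrder_optimality_at_zero (hH : ∀ u v, ⟪H u, v⟫ = ⟪u, H v⟫)
    (hmin : ∀ y, cubicModel g H M 0 ≤ cubicModel g H M y) (v : EuclideanSpace ℝ (Fin d)) :
    0 ≤ ⟪v, H v⟫ := by
  have hscaled : ∀ t > 0, 0 ≤ ⟪v, H v⟫ + M / 3 * ‖v‖ ^ 3 * t := fun t ht => by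
    have h := (sub_nonneg.mpr (hmin _)).trans_eq
      (sub_eq_of_firstOrder_optimality hH (firstOrder_optimality hH hmin) (t • v))
    simp only [norm_zero, sub_zero, map_smul, real_inner_smul_left, real_inner_smul_right,
      norm_smul, mul_pow, Real.norm_eq_abs, abs_of_pos ht] at h
    have ht2 : 0 < t ^ 2 := by positivity
    nlinarith
  refine ge_of_tendsto (x := 𝓝[>] 0) ?_ (eventually_nhdsWithin_of_forall hscaled)
  exact tendsto_nhdsWithin_of_tendsto_nhds (by simpa using
    ((continuous_const.mul continuous_id).tendsto (0 : ℝ)).const_add ⟪v, H v⟫)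

theorem secondOrder_optimality (hH : ∀ u v, ⟪H u, v⟫ = ⟪u, H v⟫) {s : EuclideanSpace ℝ (Fin d)}
    (hmin : ∀ y, cubicModel g H M s ≤ cubicModel g H M y) (v : EuclideanSpace ℝ (Fin d)) :
    0 ≤ ⟪v, H v⟫ + M / 2 * ‖s‖ * ‖v‖ ^ 2 := by
  rcases eq_or_ne s 0 with rfl | hs
  · simpa using secondOrder_optimality_at_zero hH hmin v
  have hℓ : innerSL ℝ s ≠ 0 := fun h => hs (by simpa using congrArg (· s) h)
  refine (ContinuousLinearMap.dense_setOf_apply_ne_zero hℓ).induction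
    (fun w hw => secondOrder_optimality_of_inner_ne_zero hH hmin hw)
    (isClosed_le continuous_const (by fun_prop)) v

end cubicModel

theorem step_norm_lower_bound_of_not_SOSP (d : ℕ) (M ε : ℝ) (hM : 0 < M) (hε : 0 < ε)
    (P : EuclideanSpace ℝ (Fin d) → ℝ) (hP : ContDiff ℝ 2 P)
    (hLip : ∀ x x', ‖fderiv ℝ (gradient P) x - fderiv ℝ (gradient P) x'‖ ≤ M * ‖x - x'‖)
    (xt : EuclideanSpace ℝ (Fin d)) (gt : EuclideanSpace ℝ (Fin d))
    (Ht : EuclideanSpace ℝ (Fin d) →L[ℝ] EuclideanSpace ℝ (Fin d))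
    (hHtSymm : ∀ u v, ⟪Ht u, v⟫ = ⟪u, Ht v⟫)
    (hg : ‖gradient P xt - gt‖ ≤ 1 / 192 * ε)
    (hH : ‖fderiv ℝ (gradient P) xt - Ht‖ ≤ 1 / 48 * Real.sqrt (M * ε))
    (sstar : EuclideanSpace ℝ (Fin d))
    (hmin : ∀ s, cubicModel gt Ht M sstar ≤ cubicModel gt Ht M s)
    (hnotSOSP : ¬ (‖gradient P (xt + sstar)‖ ≤ ε ∧
      ∀ v : EuclideanSpace ℝ (Fin d),
        -(Real.sqrt (M * ε)) * ‖v‖ ^ 2 ≤ ⟪v, fderiv ℝ (gradient P) (xt + sstar) v⟫)) :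
    1 / 2 * Real.sqrt (ε / M) ≤ ‖sstar‖ := by
  have hMa := Real.mul_sqrt_div_eq_sqrt_mul hM ε
  set a := Real.sqrt (M * ε)
  have ha : a ^ 2 = M * ε := Real.sq_sqrt (by positivity)
  by_contra! hsmall
  have hstep : M * ‖sstar‖ < a / 2 := by nlinarith
  have hmodel : ‖gt + Ht sstar‖ = M / 2 * ‖sstar‖ ^ 2 := by
    rw [eq_neg_of_add_eq_zero_left (cubicModel.firstOrder_optimality hHtSymm hmin), norm_neg,
      norm_smul, Real.norm_of_nonneg (by positivity)]
    ring
  refine hnotSOSP ⟨?_, fun v => ?_⟩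
  · have hgrad := norm_apply_add_le_of_lipschitz_fderiv hM.le hP.differentiable_gradient
      (fun y => hLip y xt) gt Ht sstar
    have hbound : M * (3 / 2 * M * ‖sstar‖ ^ 2 + a / 48 * ‖sstar‖) < M * (191 / 192 * ε) := by
      nlinarith [norm_nonneg sstar, mul_nonneg hM.le (norm_nonneg sstar)]
    nlinarith [lt_of_mul_lt_mul_left hbound hM.le,
      mul_le_mul_of_nonneg_right hH (norm_nonneg sstar)]
  · have hHess : ‖fderiv ℝ (gradient P) (xt + sstar) - Ht‖ ≤ M * ‖sstar‖ + 1 / 48 * a :=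
      (norm_sub_le_norm_sub_add_norm_sub _ (fderiv ℝ (gradient P) xt) _).trans
        (add_le_add (by simpa using hLip (xt + sstar) xt) hH)
    nlinarith [sub_mul_norm_sq_le_inner_apply_self hHess v,
      cubicModel.secondOrder_optimality hHtSymm hmin v,
      mul_le_mul_of_nonneg_right hstep.le (sq_nonneg ‖v‖),
      mul_nonneg (Real.sqrt_nonneg (M * ε)) (sq_nonneg ‖v‖)]
end

section
/- Let P be twice differentiable with M-Lipschitz Hessian and lower bounded by P*. Suppose for each t, ‖∇P(x_t) − g_t‖ ≤ C_g ε and ‖∇²P(x_t) − H_t‖ ≤ C_H √(Mε) with C_g = 1/192, C_H = 1/48, s_t* minimizes the cubic model m_t(s) = g_tᵀs + ½ sᵀH_t s + (M/6)‖s‖³, x_{t+1} = x_t + s_t*, and ‖s_t*‖ ≥ (1/2)√(ε/M). Then for each t, (1/192)√(ε³/M) ≤ P(x_t) − P(x_{t+1}); consequently the iteration count before termination is at most 192 (P(x_0) − P*) √M ε^{−3/2}. -/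
/-!
Along the segment `τ ↦ x + τ • s`, the Lipschitz bound on the Hessian makes the derivative of the
second-order Taylor remainder `O(τ²)`, so `P (x + s)` exceeds its quadratic model by at most
`M ‖s‖³ / 6`. Replacing the exact gradient and Hessian by `g` and `H` costs
`‖∇P - g‖ ‖s‖ + ‖∇²P - H‖ ‖s‖² / 2`, while comparing the minimiser `s` of the cubic model with
its rescalings `c • s` (stationarity at `c = 1`, and `c = -1`) gives `m(s) ≤ -M ‖s‖³ / 12`.
Once `‖s‖ ≥ √(ε / M) / 2` the cubic term dominates both errors, so every step decreases `P` by
at least `√(ε³ / M) / 192`, and these decreases sum to at most `P (x 0) - P*`.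
-/

open RealInnerProductSpace

open Set

theorem norm_image_one_le_of_norm_deriv_le_mul_pow {F : Type*} [NormedAddCommGroup F]
    [NormedSpace ℝ F] {φ φ' : ℝ → F} {C : ℝ} (n : ℕ) (hφ : ∀ τ, HasDerivAt φ (φ' τ) τ)
    (hφ0 : φ 0 = 0) (hbound : ∀ τ ∈ Ico (0 : ℝ) 1, ‖φ' τ‖ ≤ C * τ ^ n) :
    ‖φ 1‖ ≤ C / (n + 1) := by
  have hB : ∀ τ : ℝ, HasDerivAt (fun τ => C / (n + 1) * τ ^ (n + 1)) (C * τ ^ n) τ := by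
    intro τ
    refine ((hasDerivAt_pow (n + 1) τ).const_mul (C / (n + 1))).congr_deriv ?_
    push_cast
    field_simp
  simpa using image_norm_le_of_norm_deriv_right_le_deriv_boundary
    (fun τ _ => (hφ τ).continuousAt.continuousWithinAt) (fun τ _ => (hφ τ).hasDerivWithinAt)
    (by simp [hφ0]) hB hbound (right_mem_Icc.2 zero_le_one)

section Taylor

variable {E F : Type*} [NormedAddCommGroup E] [NormedSpace ℝ E]
  [NormedAddCommGroup F] [NormedSpace ℝ F] {M : ℝ}

theorem hasDerivAt_comp_add_smul {f : E → F} {f' : E →L[ℝ] F} {x s : E} {τ : ℝ}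
    (hf : HasFDerivAt f f' (x + τ • s)) : HasDerivAt (fun τ : ℝ => f (x + τ • s)) (f' s) τ := by
  have hline : HasDerivAt (fun τ : ℝ => x + τ • s) s τ := by
    simpa using ((hasDerivAt_id τ).smul_const s).const_add x
  exact hf.comp_hasDerivAt τ hline

theorem norm_image_sub_sub_fderiv_le_of_lipschitz {f : E → F} {f' : E → E →L[ℝ] F} {x : E}
    (hf : ∀ y, HasFDerivAt f (f' y) y) (hLip : ∀ y, ‖f' y - f' x‖ ≤ M * ‖y - x‖) (s : E) :
    ‖f (x + s) - f x - f' x s‖ ≤ M / 2 * ‖s‖ ^ 2 := by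
  have hφ : ∀ τ : ℝ, HasDerivAt (fun τ : ℝ => f (x + τ • s) - f x - τ • f' x s)
      (f' (x + τ • s) s - f' x s) τ := fun τ =>
    ((hasDerivAt_comp_add_smul (hf _)).sub_const _).sub
      (by simpa using (hasDerivAt_id τ).smul_const (f' x s))
  have hbound : ∀ τ ∈ Ico (0 : ℝ) 1, ‖f' (x + τ • s) s - f' x s‖ ≤ M * ‖s‖ ^ 2 * τ ^ 1 := by
    intro τ hτ
    calc ‖f' (x + τ • s) s - f' x s‖ = ‖(f' (x + τ • s) - f' x) s‖ := rfl
      _ ≤ ‖f' (x + τ • s) - f' x‖ * ‖s‖ := (f' (x + τ • s) - f' x).le_opNorm s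
      _ ≤ M * ‖x + τ • s - x‖ * ‖s‖ := by gcongr; exact hLip _
      _ = M * ‖s‖ ^ 2 * τ ^ 1 := by
        rw [add_sub_cancel_left, norm_smul, Real.norm_of_nonneg hτ.1]; ring
  have hremainder := norm_image_one_le_of_norm_deriv_le_mul_pow 1 hφ (by simp) hbound
  norm_num at hremainder
  linarith

end Taylor

section Hilbert

variable {E : Type*} [NormedAddCommGroup E] [InnerProductSpace ℝ E] [CompleteSpace E] {M : ℝ}

theorem ContDiff.gradient_right {f : E → ℝ} {m n : WithTop ℕ∞} (hf : ContDiff ℝ n f)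
    (hmn : m + 1 ≤ n) : ContDiff ℝ m (gradient f) :=
  (InnerProductSpace.toDual ℝ E).symm.contDiff.comp (hf.fderiv_right hmn)

theorem le_add_inner_add_inner_add_of_lipschitz_hessian {P : E → ℝ} {G : E → E}
    {G' : E → E →L[ℝ] E} {x : E} (hPG : ∀ y, HasGradientAt P (G y) y)
    (hG : ∀ y, HasFDerivAt G (G' y) y) (hLip : ∀ y, ‖G' y - G' x‖ ≤ M * ‖y - x‖) (s : E) :
    P (x + s) ≤ P x + ⟪G x, s⟫ + 1 / 2 * ⟪s, G' x s⟫ + M / 6 * ‖s‖ ^ 3 := by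
  have hφ : ∀ τ : ℝ, HasDerivAt
      (fun τ : ℝ => P (x + τ • s) - P x - τ * ⟪G x, s⟫ - τ ^ 2 / 2 * ⟪s, G' x s⟫)
      ⟪G (x + τ • s) - G x - G' x (τ • s), s⟫ τ := by
    intro τ
    have hP := hasDerivAt_comp_add_smul (hPG (x + τ • s)).hasFDerivAt (τ := τ)
    have hlin := (hasDerivAt_id τ).mul_const ⟪G x, s⟫
    have hquad := ((hasDerivAt_pow 2 τ).div_const 2).mul_const ⟪s, G' x s⟫
    refine (((hP.sub_const (P x)).sub hlin).sub hquad).congr_deriv ?_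
    simp only [InnerProductSpace.toDual_apply_apply, map_smul, inner_sub_left,
      real_inner_smul_left, real_inner_comm s (G' x s)]
    push_cast
    ring
  have hbound : ∀ τ ∈ Ico (0 : ℝ) 1,
      ‖⟪G (x + τ • s) - G x - G' x (τ • s), s⟫‖ ≤ M / 2 * ‖s‖ ^ 3 * τ ^ 2 := by
    intro τ hτ
    calc ‖⟪G (x + τ • s) - G x - G' x (τ • s), s⟫‖
        ≤ ‖G (x + τ • s) - G x - G' x (τ • s)‖ * ‖s‖ := norm_inner_le_norm _ _
      _ ≤ M / 2 * ‖τ • s‖ ^ 2 * ‖s‖ := by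
        gcongr; exact norm_image_sub_sub_fderiv_le_of_lipschitz hG hLip _
      _ = M / 2 * ‖s‖ ^ 3 * τ ^ 2 := by
        rw [norm_smul, Real.norm_of_nonneg hτ.1]; ring
  have hremainder := norm_image_one_le_of_norm_deriv_le_mul_pow 2 hφ (by simp) hbound
  norm_num at hremainder
  linarith [le_abs_self (P (x + s) - P x - ⟪G x, s⟫ - 2⁻¹ * ⟪s, G' x s⟫)]

end Hilbert

theorem add_add_le_neg_half_of_forall_le {a q k : ℝ}
    (hmin : ∀ c : ℝ, a + q + k ≤ c * a + c ^ 2 * q + |c| ^ 3 * k) : a + q + k ≤ -(k / 2) := by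
  have hloc : IsLocalMin (fun c : ℝ => c * a + c ^ 2 * q + c ^ 3 * k) 1 := by
    filter_upwards [Ioi_mem_nhds one_pos] with c hc
    simpa [abs_of_pos (mem_Ioi.1 hc)] using hmin c
  have hderiv : HasDerivAt (fun c : ℝ => c * a + c ^ 2 * q + c ^ 3 * k) (a + 2 * q + 3 * k) 1 := by
    refine ((((hasDerivAt_id 1).mul_const a).add ((hasDerivAt_pow 2 1).mul_const q)).add
      ((hasDerivAt_pow 3 1).mul_const k)).congr_deriv ?_
    norm_num
  have hstationary := hloc.hasDerivAt_eq_zero hderiv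
  have hreflect := hmin (-1)
  norm_num at hreflect
  linarith

theorem cubicModel_smul {d : ℕ} (g : EuclideanSpace ℝ (Fin d))
    (H : EuclideanSpace ℝ (Fin d) →L[ℝ] EuclideanSpace ℝ (Fin d)) (M c : ℝ)
    (s : EuclideanSpace ℝ (Fin d)) :
    cubicModel g H M (c • s) =
      c * ⟪g, s⟫ + c ^ 2 * (1 / 2 * ⟪s, H s⟫) + |c| ^ 3 * (M / 6 * ‖s‖ ^ 3) := by
  simp only [cubicModel, map_smul, real_inner_smul_left, real_inner_smul_right, norm_smul,
    Real.norm_eq_abs]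
  ring

theorem cubicModel_le_of_forall_le {d : ℕ} {g : EuclideanSpace ℝ (Fin d)}
    {H : EuclideanSpace ℝ (Fin d) →L[ℝ] EuclideanSpace ℝ (Fin d)} {M : ℝ}
    {s : EuclideanSpace ℝ (Fin d)} (hmin : ∀ s', cubicModel g H M s ≤ cubicModel g H M s') :
    cubicModel g H M s ≤ -(M / 12) * ‖s‖ ^ 3 := by
  calc cubicModel g H M s = ⟪g, s⟫ + 1 / 2 * ⟪s, H s⟫ + M / 6 * ‖s‖ ^ 3 := rfl
    _ ≤ -(M / 6 * ‖s‖ ^ 3 / 2) := add_add_le_neg_half_of_forall_le fun c => by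
      rw [← cubicModel_smul]; exact hmin (c • s)
    _ = -(M / 12) * ‖s‖ ^ 3 := by ring

theorem sub_le_cubicModel_add_of_lipschitz_hessian {d : ℕ} {M : ℝ}
    {P : EuclideanSpace ℝ (Fin d) → ℝ} {G : EuclideanSpace ℝ (Fin d) → EuclideanSpace ℝ (Fin d)}
    {G' : EuclideanSpace ℝ (Fin d) → EuclideanSpace ℝ (Fin d) →L[ℝ] EuclideanSpace ℝ (Fin d)}
    {x : EuclideanSpace ℝ (Fin d)} (hPG : ∀ y, HasGradientAt P (G y) y)
    (hG : ∀ y, HasFDerivAt G (G' y) y) (hLip : ∀ y, ‖G' y - G' x‖ ≤ M * ‖y - x‖)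
    (g : EuclideanSpace ℝ (Fin d)) (H : EuclideanSpace ℝ (Fin d) →L[ℝ] EuclideanSpace ℝ (Fin d))
    (s : EuclideanSpace ℝ (Fin d)) :
    P (x + s) - P x ≤ cubicModel g H M s + ‖G x - g‖ * ‖s‖ + 1 / 2 * (‖G' x - H‖ * ‖s‖ ^ 2) := by
  have htaylor := le_add_inner_add_inner_add_of_lipschitz_hessian hPG hG hLip s
  have hgrad : ⟪G x - g, s⟫ ≤ ‖G x - g‖ * ‖s‖ := real_inner_le_norm _ _
  have hhess : ⟪s, (G' x - H) s⟫ ≤ ‖G' x - H‖ * ‖s‖ ^ 2 :=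
    calc ⟪s, (G' x - H) s⟫ ≤ ‖s‖ * ‖(G' x - H) s‖ := real_inner_le_norm _ _
      _ ≤ ‖s‖ * (‖G' x - H‖ * ‖s‖) := by gcongr; exact (G' x - H).le_opNorm s
      _ = ‖G' x - H‖ * ‖s‖ ^ 2 := by ring
  rw [inner_sub_left] at hgrad
  rw [sub_apply, inner_sub_right] at hhess
  unfold cubicModel
  linarith

theorem neg_cube_add_le_of_half_le {M u r : ℝ} (hM : 0 < M) (hu : 0 ≤ u) (hr : u / 2 ≤ r) :
    -(M / 12) * r ^ 3 + M * u ^ 2 / 192 * r + M * u / 96 * r ^ 2 ≤ -(M * u ^ 3 / 192) := by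
  have hfactor : 0 ≤ M * ((r - u / 2) * (16 * r ^ 2 + 6 * u * r + 2 * u ^ 2)) := by
    have hur : 0 ≤ u * r := mul_nonneg hu (by linarith)
    exact mul_nonneg hM.le (mul_nonneg (by linarith) (by nlinarith [sq_nonneg r, sq_nonneg u]))
  nlinarith

theorem inexact_cubic_step_decrease {d : ℕ} {M ε : ℝ} (hM : 0 < M) (hε : 0 < ε)
    {P : EuclideanSpace ℝ (Fin d) → ℝ} {G : EuclideanSpace ℝ (Fin d) → EuclideanSpace ℝ (Fin d)}
    {G' : EuclideanSpace ℝ (Fin d) → EuclideanSpace ℝ (Fin d) →L[ℝ] EuclideanSpace ℝ (Fin d)}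
    {x g s : EuclideanSpace ℝ (Fin d)} {H : EuclideanSpace ℝ (Fin d) →L[ℝ] EuclideanSpace ℝ (Fin d)}
    (hPG : ∀ y, HasGradientAt P (G y) y) (hG : ∀ y, HasFDerivAt G (G' y) y)
    (hLip : ∀ y, ‖G' y - G' x‖ ≤ M * ‖y - x‖) (hg : ‖G x - g‖ ≤ 1 / 192 * ε)
    (hH : ‖G' x - H‖ ≤ 1 / 48 * Real.sqrt (M * ε))
    (hmin : ∀ s', cubicModel g H M s ≤ cubicModel g H M s')
    (hs : 1 / 2 * Real.sqrt (ε / M) ≤ ‖s‖) :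
    1 / 192 * Real.sqrt (ε ^ 3 / M) ≤ P x - P (x + s) := by
  set u := Real.sqrt (ε / M)
  have hu : 0 ≤ u := Real.sqrt_nonneg _
  have hεu : ε = M * u ^ 2 := by
    rw [Real.sq_sqrt (by positivity)]; field_simp
  have hsqrt_Mε : Real.sqrt (M * ε) = M * u := by
    rw [hεu, ← Real.sqrt_sq (by positivity : 0 ≤ M * u)]; ring_nf
  have hsqrt_ε3 : Real.sqrt (ε ^ 3 / M) = M * u ^ 3 := by
    rw [hεu, ← Real.sqrt_sq (by positivity : 0 ≤ M * u ^ 3)]; field_simp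
  have hstep := sub_le_cubicModel_add_of_lipschitz_hessian hPG hG hLip g H s
  have hmodel := cubicModel_le_of_forall_le hmin
  have hgrad : ‖G x - g‖ * ‖s‖ ≤ M * u ^ 2 / 192 * ‖s‖ := by
    gcongr; linarith
  have hhess : 1 / 2 * (‖G' x - H‖ * ‖s‖ ^ 2) ≤ M * u / 96 * ‖s‖ ^ 2 := by
    rw [hsqrt_Mε] at hH
    nlinarith [sq_nonneg ‖s‖]
  have hcubic := neg_cube_add_le_of_half_le hM hu (show u / 2 ≤ ‖s‖ by linarith)
  rw [hsqrt_ε3]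
  linarith

theorem natCast_le_div_of_forall_le_sub_succ {f : ℕ → ℝ} {Δ m : ℝ} (hΔ : 0 < Δ)
    (hdecr : ∀ t, Δ ≤ f t - f (t + 1)) (hlower : ∀ t, m ≤ f t) (T : ℕ) :
    (T : ℝ) ≤ (f 0 - m) / Δ := by
  have htelescope : ∀ T : ℕ, (T : ℝ) * Δ ≤ f 0 - f T := by
    intro T
    induction T with
    | zero => simp
    | succ n ih => push_cast; linarith [hdecr n]
  rw [le_div_iff₀ hΔ]
  linarith [htelescope T, hlower T]

theorem inv_sqrt_pow_three_div {ε : ℝ} (hε : 0 ≤ ε) (M : ℝ) :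
    (Real.sqrt (ε ^ 3 / M))⁻¹ = Real.sqrt M * ε ^ (-(3 : ℝ) / 2) := by
  have hpow : Real.sqrt (ε ^ 3) = ε ^ ((3 : ℝ) / 2) := by
    rw [Real.sqrt_eq_rpow, ← Real.rpow_natCast, ← Real.rpow_mul hε]
    norm_num
  rw [Real.sqrt_div (pow_nonneg hε 3), inv_div, hpow, neg_div, Real.rpow_neg hε, div_eq_mul_inv]

theorem cubic_newton_descent_and_iteration_bound_general (d : ℕ) (M ε Pstar : ℝ)
    (hM : 0 < M) (hε : 0 < ε)
    (P : EuclideanSpace ℝ (Fin d) → ℝ) (hP : ContDiff ℝ 2 P)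
    (hLip : ∀ x x', ‖fderiv ℝ (gradient P) x - fderiv ℝ (gradient P) x'‖ ≤ M * ‖x - x'‖)
    (hlower : ∀ x, Pstar ≤ P x)
    (x : ℕ → EuclideanSpace ℝ (Fin d)) (g : ℕ → EuclideanSpace ℝ (Fin d))
    (H : ℕ → EuclideanSpace ℝ (Fin d) →L[ℝ] EuclideanSpace ℝ (Fin d))
    (s : ℕ → EuclideanSpace ℝ (Fin d))
    (hg : ∀ t, ‖gradient P (x t) - g t‖ ≤ 1 / 192 * ε)
    (hH : ∀ t, ‖fderiv ℝ (gradient P) (x t) - H t‖ ≤ 1 / 48 * Real.sqrt (M * ε))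
    (hmin : ∀ t, ∀ s', cubicModel (g t) (H t) M (s t) ≤ cubicModel (g t) (H t) M s')
    (hstep : ∀ t, x (t + 1) = x t + s t)
    (hsnorm : ∀ t, 1 / 2 * Real.sqrt (ε / M) ≤ ‖s t‖) :
    (∀ t, 1 / 192 * Real.sqrt (ε ^ 3 / M) ≤ P (x t) - P (x (t + 1))) ∧
      ∀ T : ℕ, (T : ℝ) ≤ 192 * (P (x 0) - Pstar) * Real.sqrt M * ε ^ (-(3 : ℝ) / 2) := by
  have hPG : ∀ y, HasGradientAt P (gradient P y) y :=
    fun y => (hP.differentiable two_ne_zero y).hasGradientAt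
  have hG : ∀ y, HasFDerivAt (gradient P) (fderiv ℝ (gradient P) y) y :=
    fun y => ((hP.gradient_right (m := 1) le_rfl).differentiable one_ne_zero y).hasFDerivAt
  have hdecr : ∀ t, 1 / 192 * Real.sqrt (ε ^ 3 / M) ≤ P (x t) - P (x (t + 1)) := fun t => by
    rw [hstep t]
    exact inexact_cubic_step_decrease hM hε hPG hG (fun y => hLip y (x t)) (hg t) (hH t) (hmin t)
      (hsnorm t)
  refine ⟨hdecr, fun T => ?_⟩
  have hΔ : 0 < 1 / 192 * Real.sqrt (ε ^ 3 / M) := by positivity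
  calc (T : ℝ) ≤ (P (x 0) - Pstar) / (1 / 192 * Real.sqrt (ε ^ 3 / M)) :=
        natCast_le_div_of_forall_le_sub_succ hΔ hdecr (fun t => hlower (x t)) T
    _ = 192 * (P (x 0) - Pstar) * Real.sqrt M * ε ^ (-(3 : ℝ) / 2) := by
        rw [div_eq_mul_inv, mul_inv, inv_sqrt_pow_three_div hε.le]
        ring

theorem cubic_newton_descent_and_iteration_bound (d : ℕ) (M ε Pstar : ℝ)
    (hM : 0 < M) (hε : 0 < ε)
    (P : EuclideanSpace ℝ (Fin d) → ℝ) (hP : ContDiff ℝ 2 P)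
    (hLip : ∀ x x', ‖fderiv ℝ (gradient P) x - fderiv ℝ (gradient P) x'‖ ≤ M * ‖x - x'‖)
    (hlower : ∀ x, Pstar ≤ P x)
    (x : ℕ → EuclideanSpace ℝ (Fin d)) (g : ℕ → EuclideanSpace ℝ (Fin d))
    (H : ℕ → EuclideanSpace ℝ (Fin d) →L[ℝ] EuclideanSpace ℝ (Fin d))
    (s : ℕ → EuclideanSpace ℝ (Fin d))
    (hHSymm : ∀ t, ∀ u v, ⟪H t u, v⟫ = ⟪u, H t v⟫)
    (hg : ∀ t, ‖gradient P (x t) - g t‖ ≤ 1 / 192 * ε)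
    (hH : ∀ t, ‖fderiv ℝ (gradient P) (x t) - H t‖ ≤ 1 / 48 * Real.sqrt (M * ε))
    (hmin : ∀ t, ∀ s', cubicModel (g t) (H t) M (s t) ≤ cubicModel (g t) (H t) M s')
    (hstep : ∀ t, x (t + 1) = x t + s t)
    (hsnorm : ∀ t, 1 / 2 * Real.sqrt (ε / M) ≤ ‖s t‖) :
    (∀ t, 1 / 192 * Real.sqrt (ε ^ 3 / M) ≤ P (x t) - P (x (t + 1))) ∧
      ∀ T : ℕ, (T : ℝ) ≤ 192 * (P (x 0) - Pstar) * Real.sqrt M * ε ^ (-(3 : ℝ) / 2) :=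
  cubic_newton_descent_and_iteration_bound_general d M ε Pstar hM hε P hP hLip hlower x g H s hg hH
    hmin hstep hsnorm
end
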